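/- Under the conformal-block-expansion setup below, assume in addition that there is τ_gap > 0 with τ_i ≥ τ_gap for every i ∈ I. Then τ_gap ≤ 2Δφ. -/

import Mathlib

/-
Write `g = 1 + G` with `G = ∑ pᵢ gᵢ`. Since all coefficients are nonnegative and every twist is at
least `τ_gap`, shrinking both arguments shrinks `G` at least like `(z z̄)^(τ_gap/2)`. Crossing at
`(a, 1 - b)` bounds `1 + G(a, 1 - b)` from below by `a^Δφ ((1 - b)/b)^Δφ`: on the crossed side the
unit operator alone contributes this. From above, the gap bound together with crossing at
`(1/2, 1 - b)` gives `1 + C a^(τ_gap/2) ((1 - b)/b)^Δφ`. Letting `b → 0` leaves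
`a^Δφ ≤ C a^(τ_gap/2)`, which fails as `a → 0` unless `τ_gap ≤ 2Δφ`.
-/

open Set

/-- A single conformal block contribution:
`g_i(z, z̄) = (z z̄)^(τᵢ/2) ∑_{n,m} a^{(i)}_{n,m} z^n z̄^m`. -/
noncomputable def blockFun (τi : ℝ) (coef : ℕ × ℕ → ℝ) (z zb : ℝ) : ℝ :=
  (z * zb) ^ (τi / 2) * ∑' nm : ℕ × ℕ, coef nm * z ^ nm.1 * zb ^ nm.2

open Filter Topology

section PowerSeries

variable {coef : ℕ × ℕ → ℝ} {z w c d : ℝ}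

lemma coef_mul_pow_mul_pow_nonneg (hcoef : ∀ nm, 0 ≤ coef nm) (hz : 0 ≤ z) (hw : 0 ≤ w)
    (nm : ℕ × ℕ) : 0 ≤ coef nm * z ^ nm.1 * w ^ nm.2 := by
  have := hcoef nm
  positivity

lemma coef_mul_pow_mul_pow_le (hcoef : ∀ nm, 0 ≤ coef nm) (hz : 0 ≤ z) (hzc : z ≤ c)
    (hw : 0 ≤ w) (hwd : w ≤ d) (nm : ℕ × ℕ) :
    coef nm * z ^ nm.1 * w ^ nm.2 ≤ coef nm * c ^ nm.1 * d ^ nm.2 := by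
  have := hcoef nm
  have := hz.trans hzc
  gcongr

lemma tsum_coef_mul_pow_mul_pow_le (hcoef : ∀ nm, 0 ≤ coef nm) (hz : 0 ≤ z) (hzc : z ≤ c)
    (hw : 0 ≤ w) (hwd : w ≤ d)
    (hS : Summable fun nm : ℕ × ℕ => coef nm * c ^ nm.1 * d ^ nm.2) :
    ∑' nm : ℕ × ℕ, coef nm * z ^ nm.1 * w ^ nm.2 ≤ ∑' nm : ℕ × ℕ, coef nm * c ^ nm.1 * d ^ nm.2 :=
  have hle := coef_mul_pow_mul_pow_le hcoef hz hzc hw hwd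
  (hS.of_nonneg_of_le (coef_mul_pow_mul_pow_nonneg hcoef hz hw) hle).tsum_le_tsum hle hS

end PowerSeries

lemma blockFun_nonneg {τi : ℝ} {coef : ℕ × ℕ → ℝ} (hcoef : ∀ nm, 0 ≤ coef nm) {z w : ℝ}
    (hz : 0 ≤ z) (hw : 0 ≤ w) : 0 ≤ blockFun τi coef z w :=
  mul_nonneg (by positivity) (tsum_nonneg (coef_mul_pow_mul_pow_nonneg hcoef hz hw))

lemma blockFun_le_rpow_mul_blockFun {τi t : ℝ} {coef : ℕ × ℕ → ℝ} (hcoef : ∀ nm, 0 ≤ coef nm)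
    {z w c d : ℝ} (hz : 0 < z) (hzc : z ≤ c) (hw : 0 < w) (hwd : w ≤ d) (htτ : t ≤ τi)
    (hS : Summable fun nm : ℕ × ℕ => coef nm * c ^ nm.1 * d ^ nm.2) :
    blockFun τi coef z w ≤ (z / c * (w / d)) ^ (t / 2) * blockFun τi coef c d := by
  have hc : 0 < c := hz.trans_le hzc
  have hd : 0 < d := hw.trans_le hwd
  have hq : 0 < z / c * (w / d) := by positivity
  have hq1 : z / c * (w / d) ≤ 1 :=
    mul_le_one₀ ((div_le_one hc).mpr hzc) (by positivity) ((div_le_one hd).mpr hwd)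
  have hprefactor : (z * w) ^ (τi / 2) ≤ (z / c * (w / d)) ^ (t / 2) * (c * d) ^ (τi / 2) := by
    rw [show z * w = z / c * (w / d) * (c * d) by field_simp, Real.mul_rpow hq.le (by positivity)]
    exact mul_le_mul_of_nonneg_right (Real.rpow_le_rpow_of_exponent_ge hq hq1 (by linarith))
      (by positivity)
  have hseries := tsum_coef_mul_pow_mul_pow_le hcoef hz.le hzc hw.le hwd hS
  unfold blockFun
  calc (z * w) ^ (τi / 2) * ∑' nm : ℕ × ℕ, coef nm * z ^ nm.1 * w ^ nm.2
      ≤ (z / c * (w / d)) ^ (t / 2) * (c * d) ^ (τi / 2) *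
          ∑' nm : ℕ × ℕ, coef nm * c ^ nm.1 * d ^ nm.2 :=
        mul_le_mul hprefactor hseries (tsum_nonneg (coef_mul_pow_mul_pow_nonneg hcoef hz.le hw.le))
          (by positivity)
    _ = _ := by ring

def SatisfiesCrossing (G : ℝ → ℝ → ℝ) (Δ : ℝ) : Prop :=
  ∀ z w : ℝ, z ∈ Ioo (0:ℝ) 1 → w ∈ Ioo (0:ℝ) 1 →
    1 + G z w = (z * w / ((1 - z) * (1 - w))) ^ Δ * (1 + G (1 - z) (1 - w))

def HasTwistGap (G : ℝ → ℝ → ℝ) (t : ℝ) : Prop :=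
  ∀ z w c d : ℝ, 0 < z → z ≤ c → c < 1 → 0 < w → w ≤ d → d < 1 →
    G z w ≤ (z / c * (w / d)) ^ (t / 2) * G c d

section Crossing

variable {G : ℝ → ℝ → ℝ} {Δ t : ℝ}

lemma rpow_mul_rpow_le_one_add_of_satisfiesCrossing (hΔ : 0 ≤ Δ)
    (hG0 : ∀ z w : ℝ, z ∈ Ioo (0:ℝ) 1 → w ∈ Ioo (0:ℝ) 1 → 0 ≤ G z w)
    (hcross : SatisfiesCrossing G Δ) {a b : ℝ} (ha : a ∈ Ioo (0:ℝ) 1) (hb : b ∈ Ioo (0:ℝ) 1) :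
    a ^ Δ * ((1 - b) / b) ^ Δ ≤ 1 + G a (1 - b) := by
  obtain ⟨ha0, ha1⟩ := ha
  obtain ⟨hb0, hb1⟩ := hb
  have h1a : 0 < 1 - a := by linarith
  have h1b : 0 < 1 - b := by linarith
  have hx : 0 ≤ a * ((1 - b) / b) := mul_nonneg ha0.le (div_nonneg h1b.le hb0.le)
  rw [hcross a (1 - b) ⟨ha0, ha1⟩ ⟨h1b, by linarith⟩, sub_sub_cancel]
  have hG_crossed : 0 ≤ G (1 - a) b := hG0 _ _ ⟨h1a, by linarith⟩ ⟨hb0, hb1⟩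
  have hle : a * ((1 - b) / b) ≤ a * (1 - b) / ((1 - a) * b) := by
    rw [mul_comm (1 - a), ← div_div, mul_div_assoc]
    exact le_div_self hx h1a (by linarith)
  calc a ^ Δ * ((1 - b) / b) ^ Δ = (a * ((1 - b) / b)) ^ Δ :=
        (Real.mul_rpow ha0.le (div_nonneg h1b.le hb0.le)).symm
    _ ≤ (a * (1 - b) / ((1 - a) * b)) ^ Δ := Real.rpow_le_rpow hx hle hΔ
    _ ≤ _ := le_mul_of_one_le_right (Real.rpow_nonneg (hx.trans hle) _) (by linarith)

lemma one_add_le_rpow_mul_of_satisfiesCrossing (ht : 0 ≤ t)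
    (hG0 : ∀ z w : ℝ, z ∈ Ioo (0:ℝ) 1 → w ∈ Ioo (0:ℝ) 1 → 0 ≤ G z w)
    (hgap : HasTwistGap G t) (hcross : SatisfiesCrossing G Δ) {b : ℝ} (hb : b ∈ Ioc (0:ℝ) (1/2)) :
    1 + G (1/2) (1 - b) ≤ ((1 - b) / b) ^ Δ * (1 + G (1/2) (1/2)) := by
  obtain ⟨hb0, hb2⟩ := hb
  have hcross_half : 1 + G (1/2) (1 - b) = ((1 - b) / b) ^ Δ * (1 + G (1/2) b) := by
    rw [hcross (1/2) (1 - b) ⟨by norm_num, by norm_num⟩ ⟨by linarith, by linarith⟩, sub_sub_cancel,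
      show (1:ℝ) - 1/2 = 1/2 by norm_num]
    congr 2
    field_simp
  have hmono : G (1/2) b ≤ G (1/2) (1/2) := by
    have := hgap (1/2) b (1/2) (1/2) (by norm_num) le_rfl (by norm_num) hb0 hb2 (by norm_num)
    have hK : 0 ≤ G (1/2) (1/2) := hG0 _ _ ⟨by norm_num, by norm_num⟩ ⟨by norm_num, by norm_num⟩
    have hfactor : (1/2 / (1/2) * (b / (1/2))) ^ (t / 2) ≤ 1 := by
      rw [div_self (by norm_num), one_mul]
      exact Real.rpow_le_one (by positivity) (div_le_one_of_le₀ hb2 (by norm_num)) (by positivity)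
    exact this.trans (mul_le_of_le_one_left hK hfactor)
  rw [hcross_half]
  exact mul_le_mul_of_nonneg_left (by linarith)
    (Real.rpow_nonneg (div_nonneg (by linarith) hb0.le) _)

lemma rpow_le_of_satisfiesCrossing (hΔ : 0 ≤ Δ) (ht : 0 ≤ t)
    (hG0 : ∀ z w : ℝ, z ∈ Ioo (0:ℝ) 1 → w ∈ Ioo (0:ℝ) 1 → 0 ≤ G z w)
    (hgap : HasTwistGap G t) (hcross : SatisfiesCrossing G Δ)
    {a b : ℝ} (ha : a ∈ Ioc (0:ℝ) (1/2)) (hb : b ∈ Ioc (0:ℝ) (1/2)) :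
    a ^ Δ ≤ (b / (1 - b)) ^ Δ + (2 * a) ^ (t / 2) * (1 + G (1/2) (1/2)) := by
  obtain ⟨ha0, ha2⟩ := ha
  have h1b : 0 < 1 - b := by linarith [hb.2]
  set A := ((1 - b) / b) ^ Δ with hA_def
  have hA : 0 < A := Real.rpow_pos_of_pos (div_pos h1b hb.1) _
  have hgap_a : G a (1 - b) ≤ (2 * a) ^ (t / 2) * G (1/2) (1 - b) := by
    have := hgap a (1 - b) (1/2) (1 - b) ha0 ha2 (by norm_num) h1b le_rfl (by linarith [hb.1])
    rwa [show a / (1/2) * ((1 - b) / (1 - b)) = 2 * a by rw [div_self h1b.ne']; ring] at this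
  have hupper := one_add_le_rpow_mul_of_satisfiesCrossing ht hG0 hgap hcross hb
  have hmain : a ^ Δ * A ≤ 1 + (2 * a) ^ (t / 2) * (1 + G (1/2) (1/2)) * A :=
    calc a ^ Δ * A ≤ 1 + G a (1 - b) :=
          rpow_mul_rpow_le_one_add_of_satisfiesCrossing hΔ hG0 hcross ⟨ha0, by linarith⟩
            ⟨hb.1, by linarith⟩
      _ ≤ 1 + (2 * a) ^ (t / 2) * G (1/2) (1 - b) := by linarith
      _ ≤ 1 + (2 * a) ^ (t / 2) * (1 + G (1/2) (1/2)) * A := by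
          rw [mul_assoc, mul_comm (1 + G (1/2) (1/2))]
          gcongr
          linarith
  have hA_inv : (b / (1 - b)) ^ Δ = A⁻¹ := by
    rw [hA_def, ← Real.inv_rpow (div_nonneg h1b.le hb.1.le), inv_div]
  rw [hA_inv, ← mul_le_mul_iff_of_pos_right hA, add_mul, inv_mul_cancel₀ hA.ne']
  exact hmain

lemma tendsto_div_one_sub_rpow_nhdsGT_zero (hΔ : 0 < Δ) :
    Tendsto (fun b : ℝ => (b / (1 - b)) ^ Δ) (𝓝[>] 0) (𝓝 0) := by
  have h : Tendsto (fun b : ℝ => b / (1 - b)) (𝓝 0) (𝓝 (0 / (1 - 0))) :=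
    tendsto_id.div (tendsto_const_nhds.sub tendsto_id) (by norm_num)
  rw [zero_div] at h
  exact (h.rpow_const_nhds_zero hΔ).mono_left nhdsWithin_le_nhds

lemma le_of_eventually_rpow_le_mul_rpow {r s M : ℝ}
    (h : ∀ᶠ x in 𝓝[>] (0:ℝ), x ^ r ≤ M * x ^ s) : s ≤ r := by
  by_contra! hrs
  have hlim : Tendsto (fun x : ℝ => M * x ^ (s - r)) (𝓝[>] 0) (𝓝 0) := by
    simpa using ((tendsto_id.rpow_const_nhds_zero (sub_pos.2 hrs)).const_mul M).mono_left
      nhdsWithin_le_nhds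
  have hone : ∀ᶠ x in 𝓝[>] (0:ℝ), 1 ≤ M * x ^ (s - r) := by
    filter_upwards [h, self_mem_nhdsWithin] with x hx (hx0 : 0 < x)
    rw [show s = r + (s - r) by ring, Real.rpow_add hx0, mul_left_comm] at hx
    exact (le_mul_iff_one_le_right (by positivity)).1 hx
  linarith [ge_of_tendsto hlim hone]

theorem le_two_mul_of_satisfiesCrossing (hΔ : 0 < Δ)
    (hG0 : ∀ z w : ℝ, z ∈ Ioo (0:ℝ) 1 → w ∈ Ioo (0:ℝ) 1 → 0 ≤ G z w)
    (hgap : HasTwistGap G t) (hcross : SatisfiesCrossing G Δ) : t ≤ 2 * Δ := by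
  by_contra! hlt
  have ht : 0 ≤ t := by linarith
  set C := 1 + G (1/2) (1/2)
  have hbound : ∀ a ∈ Ioc (0:ℝ) (1/2), a ^ Δ ≤ 2 ^ (t / 2) * C * a ^ (t / 2) := by
    intro a ha
    have hlim := (tendsto_div_one_sub_rpow_nhdsGT_zero hΔ).add_const ((2 * a) ^ (t / 2) * C)
    have := ge_of_tendsto hlim <| mem_of_superset (Ioc_mem_nhdsGT one_half_pos) fun b hb =>
      rpow_le_of_satisfiesCrossing hΔ.le ht hG0 hgap hcross ha hb
    rwa [zero_add, Real.mul_rpow zero_le_two ha.1.le, mul_right_comm] at this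
  have := le_of_eventually_rpow_le_mul_rpow (mem_of_superset (Ioc_mem_nhdsGT one_half_pos) hbound)
  linarith

end Crossing

section BlockSum

variable {I : Type*} {p τ : I → ℝ} {coef : I → ℕ × ℕ → ℝ}

noncomputable def blockSum (p τ : I → ℝ) (coef : I → ℕ × ℕ → ℝ) (z w : ℝ) : ℝ :=
  ∑' i, p i * blockFun (τ i) (coef i) z w

lemma blockSum_nonneg (hp : ∀ i, 0 ≤ p i) (hcoef : ∀ i nm, 0 ≤ coef i nm) {z w : ℝ}
    (hz : 0 ≤ z) (hw : 0 ≤ w) : 0 ≤ blockSum p τ coef z w :=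
  tsum_nonneg fun i => mul_nonneg (hp i) (blockFun_nonneg (hcoef i) hz hw)

lemma blockSum_le_rpow_mul_blockSum {t : ℝ} (hp : ∀ i, 0 ≤ p i)
    (hcoef : ∀ i nm, 0 ≤ coef i nm) (htτ : ∀ i, t ≤ τ i) {z w c d : ℝ}
    (hz : 0 < z) (hzc : z ≤ c) (hw : 0 < w) (hwd : w ≤ d)
    (hinner : ∀ i, Summable fun nm : ℕ × ℕ => coef i nm * c ^ nm.1 * d ^ nm.2)
    (hsum : Summable fun i => p i * blockFun (τ i) (coef i) c d) :
    blockSum p τ coef z w ≤ (z / c * (w / d)) ^ (t / 2) * blockSum p τ coef c d := by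
  have hterm : ∀ i, p i * blockFun (τ i) (coef i) z w ≤
      (z / c * (w / d)) ^ (t / 2) * (p i * blockFun (τ i) (coef i) c d) := fun i => by
    rw [mul_left_comm]
    exact mul_le_mul_of_nonneg_left
      (blockFun_le_rpow_mul_blockFun (hcoef i) hz hzc hw hwd (htτ i) (hinner i)) (hp i)
  have hsum' := hsum.mul_left ((z / c * (w / d)) ^ (t / 2))
  unfold blockSum
  rw [← tsum_mul_left]
  exact (hsum'.of_nonneg_of_le
    (fun i => mul_nonneg (hp i) (blockFun_nonneg (hcoef i) hz.le hw.le)) hterm).tsum_le_tsum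
    hterm hsum'

lemma hasTwistGap_blockSum {t : ℝ} (hp : ∀ i, 0 ≤ p i)
    (hcoef : ∀ i nm, 0 ≤ coef i nm) (htτ : ∀ i, t ≤ τ i)
    (hinner : ∀ i, ∀ z w : ℝ, 0 ≤ z → z < 1 → 0 ≤ w → w < 1 →
      Summable fun nm : ℕ × ℕ => coef i nm * z ^ nm.1 * w ^ nm.2)
    (hsum : ∀ z w : ℝ, z ∈ Ioo (0:ℝ) 1 → w ∈ Ioo (0:ℝ) 1 →
      Summable fun i => p i * blockFun (τ i) (coef i) z w) :
    HasTwistGap (blockSum p τ coef) t := by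
  intro z w c d hz hzc hc hw hwd hd
  have hc0 : 0 < c := hz.trans_le hzc
  have hd0 : 0 < d := hw.trans_le hwd
  exact blockSum_le_rpow_mul_blockSum hp hcoef htτ hz hzc hw hwd
    (fun i => hinner i c d hc0.le hc hd0.le hd) (hsum c d ⟨hc0, hc⟩ ⟨hd0, hd⟩)

end BlockSum

theorem stmt3_general {I : Type*} (Δφ : ℝ) (hΔ : 0 < Δφ)
    (p τ : I → ℝ) (coef : I → ℕ × ℕ → ℝ)
    (hp : ∀ i, 0 ≤ p i) (hcoef : ∀ i nm, 0 ≤ coef i nm)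
    (hinner : ∀ i, ∀ z zb : ℝ, 0 ≤ z → z < 1 → 0 ≤ zb → zb < 1 →
      Summable (fun nm : ℕ × ℕ => coef i nm * z ^ nm.1 * zb ^ nm.2))
    (hsum : ∀ z zb : ℝ, z ∈ Ioo (0:ℝ) 1 → zb ∈ Ioo (0:ℝ) 1 →
      Summable (fun i => p i * blockFun (τ i) (coef i) z zb))
    (hcross : ∀ z zb : ℝ, z ∈ Ioo (0:ℝ) 1 → zb ∈ Ioo (0:ℝ) 1 →
      1 + ∑' i, p i * blockFun (τ i) (coef i) z zb =
        (z * zb / ((1 - z) * (1 - zb))) ^ Δφ *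
          (1 + ∑' i, p i * blockFun (τ i) (coef i) (1 - z) (1 - zb)))
    (τgap : ℝ) (hτgap : ∀ i, τgap ≤ τ i) :
    τgap ≤ 2 * Δφ :=
  le_two_mul_of_satisfiesCrossing hΔ (fun _ _ hz hw => blockSum_nonneg hp hcoef hz.1.le hw.1.le)
    (hasTwistGap_blockSum hp hcoef hτgap hinner hsum) hcross

/-- Theorem 2.1(a): in the conformal-block-expansion setup, a twist gap
`τᵢ ≥ τ_gap > 0` forces `τ_gap ≤ 2Δφ`. -/
theorem stmt3 {I : Type*} [Countable I] (Δφ : ℝ) (hΔ : 0 < Δφ)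
    (p τ : I → ℝ) (coef : I → ℕ × ℕ → ℝ)
    (hp : ∀ i, 0 ≤ p i) (hτ : ∀ i, 0 ≤ τ i) (hcoef : ∀ i nm, 0 ≤ coef i nm)
    (hinner : ∀ i, ∀ z zb : ℝ, 0 ≤ z → z < 1 → 0 ≤ zb → zb < 1 →
      Summable (fun nm : ℕ × ℕ => coef i nm * z ^ nm.1 * zb ^ nm.2))
    (hsum : ∀ z zb : ℝ, z ∈ Ioo (0:ℝ) 1 → zb ∈ Ioo (0:ℝ) 1 →
      Summable (fun i => p i * blockFun (τ i) (coef i) z zb))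
    (hcross : ∀ z zb : ℝ, z ∈ Ioo (0:ℝ) 1 → zb ∈ Ioo (0:ℝ) 1 →
      1 + ∑' i, p i * blockFun (τ i) (coef i) z zb =
        (z * zb / ((1 - z) * (1 - zb))) ^ Δφ *
          (1 + ∑' i, p i * blockFun (τ i) (coef i) (1 - z) (1 - zb)))
    (τgap : ℝ) (hgap : 0 < τgap) (hτgap : ∀ i, τgap ≤ τ i) :
    τgap ≤ 2 * Δφ :=
  stmt3_general Δφ hΔ p τ coef hp hcoef hinner hsum hcross τgap hτgap
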